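/- A digraph whose underlying graph is connected has a nowhere-zero p-flow if and only if there exists a map ψ: E → {0,...,p−2} such that the number of even ψ-conformal dual p-flows differs from the number of odd ψ-conformal dual p-flows. -/
import Mathlib


open Finset

/-- A dual `p`-flow: signed sum along every closed walk (hence every circuit) vanishes. -/
def IsDualFlow {V E : Type} (p : ℕ) (tl hd : E → V) (φ : E → ZMod p) : Prop :=
  ∀ (n : ℕ) (v : Fin (n + 1) → V) (e : Fin n → E) (σ : Fin n → Bool),
    v 0 = v (Fin.last n) →
    (∀ i : Fin n,
      (σ i = true → tl (e i) = v i.castSucc ∧ hd (e i) = v i.succ) ∧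
      (σ i = false → hd (e i) = v i.castSucc ∧ tl (e i) = v i.succ)) →
    (∑ i : Fin n, if σ i then φ (e i) else -φ (e i)) = 0

/-- The underlying undirected graph of the digraph is connected. -/
def DigraphConnected {V E : Type} (tl hd : E → V) : Prop :=
  ∀ u w : V, Relation.ReflTransGen
    (fun a b => ∃ e : E, (tl e = a ∧ hd e = b) ∨ (tl e = b ∧ hd e = a)) u w

/-- `φ` is `ψ`-conformal: `φ(e) ∈ {ψ(e), p-1}` for every arc. -/
def ConformalMap {E : Type} (p : ℕ) (ψ : E → Fin (p - 1)) (φ : E → ZMod p) : Prop :=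
  ∀ e, φ e = ((ψ e : ℕ) : ZMod p) ∨ φ e = ((p - 1 : ℕ) : ZMod p)

/-- `φ` is even: the number of arcs labelled `p-1` is even. -/
def EvenMap {E : Type} (p : ℕ) (φ : E → ZMod p) : Prop :=
  Even (Nat.card {e : E // φ e = ((p - 1 : ℕ) : ZMod p)})

/-- `φ` is a `p`-flow: flow conservation mod `p` at every vertex. -/
def IsFlow {V E : Type} [Fintype E] [DecidableEq V] (p : ℕ) (tl hd : E → V)
    (φ : E → ZMod p) : Prop :=
  ∀ v : V, (∑ e ∈ univ.filter (fun e => hd e = v), φ e) =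
    ∑ e ∈ univ.filter (fun e => tl e = v), φ e
open Finset

section Walks

variable {V E : Type} (tl hd : E → V)

/-- Walks in the underlying undirected multigraph, as lists of (edge, direction). -/
inductive LWalk : V → V → List (E × Bool) → Prop
  | nil (u : V) : LWalk u u []
  | consT {u w : V} {l : List (E × Bool)} (e : E) (ht : tl e = u)
      (h : LWalk (hd e) w l) : LWalk u w ((e, true) :: l)
  | consF {u w : V} {l : List (E × Bool)} (e : E) (hh : hd e = u)
      (h : LWalk (tl e) w l) : LWalk u w ((e, false) :: l)

variable {p : ℕ}

/-- Signed sum of a map along a list of steps. -/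
def wsum (φ : E → ZMod p) : List (E × Bool) → ZMod p
  | [] => 0
  | s :: l => (if s.2 then φ s.1 else -φ s.1) + wsum φ l

lemma wsum_append (φ : E → ZMod p) (l₁ l₂ : List (E × Bool)) :
    wsum φ (l₁ ++ l₂) = wsum φ l₁ + wsum φ l₂ := by
  induction l₁ with
  | nil => simp [wsum]
  | cons s l ih => simp [wsum, ih, add_assoc]

lemma LWalk.append {tl hd : E → V} {u w x : V} {l₁ l₂ : List (E × Bool)}
    (h₁ : LWalk tl hd u w l₁) (h₂ : LWalk tl hd w x l₂) : LWalk tl hd u x (l₁ ++ l₂) := by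
  induction h₁ with
  | nil => exact h₂
  | consT e ht h ih => exact .consT e ht (ih h₂)
  | consF e hh h ih => exact .consF e hh (ih h₂)

lemma LWalk.reverse {tl hd : E → V} {u w : V} {l : List (E × Bool)}
    (h : LWalk tl hd u w l) : LWalk tl hd w u (l.reverse.map fun s => (s.1, !s.2)) := by
  induction h with
  | nil => exact .nil _
  | consT e ht h ih =>
      rw [List.reverse_cons, List.map_append]
      exact ih.append (by subst ht; exact .consF e rfl (.nil _))
  | consF e hh h ih =>
      rw [List.reverse_cons, List.map_append]
      exact ih.append (by subst hh; exact .consT e rfl (.nil _))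

lemma wsum_reverse (φ : E → ZMod p) (l : List (E × Bool)) :
    wsum φ (l.reverse.map fun s => (s.1, !s.2)) = -wsum φ l := by
  induction l with
  | nil => simp [wsum]
  | cons s l ih =>
      rw [List.reverse_cons, List.map_append, wsum_append, ih]
      cases s with
      | mk e b => cases b <;> simp [wsum] <;> abel

/-- The vertex reached after `i` steps. -/
def vAt : V → List (E × Bool) → ℕ → V
  | u, _, 0 => u
  | u, [], _ + 1 => u
  | _, s :: l, i + 1 => vAt (if s.2 then hd s.1 else tl s.1) l i

@[simp] lemma vAt_zero (u : V) (l : List (E × Bool)) : vAt tl hd u l 0 = u := by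
  cases l <;> rfl

lemma LWalk.vAt_length {tl hd : E → V} {u w : V} {l : List (E × Bool)}
    (h : LWalk tl hd u w l) : vAt tl hd u l l.length = w := by
  induction h with
  | nil => rfl
  | consT e ht h ih => simpa [vAt] using ih
  | consF e hh h ih => simpa [vAt] using ih

lemma LWalk.vAt_step {tl hd : E → V} {u w : V} {l : List (E × Bool)}
    (h : LWalk tl hd u w l) : ∀ (i : ℕ) (hi : i < l.length),
      ((l.get ⟨i, hi⟩).2 = true →
        tl (l.get ⟨i, hi⟩).1 = vAt tl hd u l i ∧ hd (l.get ⟨i, hi⟩).1 = vAt tl hd u l (i + 1)) ∧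
      ((l.get ⟨i, hi⟩).2 = false →
        hd (l.get ⟨i, hi⟩).1 = vAt tl hd u l i ∧ tl (l.get ⟨i, hi⟩).1 = vAt tl hd u l (i + 1)) := by
  induction h with
  | nil => intro i hi; simp at hi
  | consT e ht h ih =>
      intro i hi
      cases i with
      | zero =>
          refine ⟨fun _ => ⟨by simpa using ht, ?_⟩, fun hc => by simp at hc⟩
          simp [vAt]
      | succ j =>
          simpa [vAt] using ih j (by simpa using hi)
  | consF e hh h ih =>
      intro i hi
      cases i with
      | zero =>
          refine ⟨fun hc => by simp at hc, fun _ => ⟨by simpa using hh, ?_⟩⟩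
          simp [vAt]
      | succ j =>
          simpa [vAt] using ih j (by simpa using hi)

lemma wsum_eq_map (φ : E → ZMod p) (l : List (E × Bool)) :
    wsum φ l = (l.map fun s => if s.2 then φ s.1 else -φ s.1).sum := by
  induction l with
  | nil => simp [wsum]
  | cons s l ih => simp [wsum, ih]

lemma wsum_eq_sum_fin (φ : E → ZMod p) (l : List (E × Bool)) :
    (∑ i : Fin l.length, if (l.get i).2 then φ (l.get i).1 else -φ (l.get i).1) = wsum φ l := by
  calc (∑ i : Fin l.length, if (l.get i).2 then φ (l.get i).1 else -φ (l.get i).1)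
      = (List.ofFn fun i : Fin l.length =>
          if (l.get i).2 then φ (l.get i).1 else -φ (l.get i).1).sum := List.sum_ofFn.symm
    _ = ((List.ofFn l.get).map fun s => if s.2 then φ s.1 else -φ s.1).sum := by
          rw [List.map_ofFn]; rfl
    _ = wsum φ l := by rw [List.ofFn_get, ← wsum_eq_map]

lemma IsDualFlow.wsum_eq_zero {tl hd : E → V} {φ : E → ZMod p} (hφ : IsDualFlow p tl hd φ)
    {u : V} {l : List (E × Bool)} (h : LWalk tl hd u u l) : wsum φ l = 0 := by
  rw [← wsum_eq_sum_fin]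
  refine hφ l.length (fun i => vAt tl hd u l i) (fun i => (l.get i).1) (fun i => (l.get i).2)
    ?_ ?_
  · simp [Fin.last, h.vAt_length]
  · intro i
    have := h.vAt_step i i.isLt
    exact ⟨fun hb => (this.1 hb), fun hb => (this.2 hb)⟩

end Walks

section Graph

variable {V E : Type} {p : ℕ} {tl hd : E → V}

lemma fin_telescope {M : Type} [AddCommGroup M] : ∀ {n : ℕ} (w : Fin (n + 1) → M),
    (∑ i : Fin n, (w i.succ - w i.castSucc)) = w (Fin.last n) - w 0
  | 0, w => by simp
  | (m + 1), w => by
      rw [Fin.sum_univ_castSucc]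
      have := fin_telescope (fun i : Fin (m + 1) => w i.castSucc)
      simp only [Fin.succ_castSucc] at this ⊢
      rw [this]
      simp [Fin.succ_last]
      try abel

lemma exists_potential (hconn : DigraphConnected tl hd) {φ : E → ZMod p}
    (hφ : IsDualFlow p tl hd φ) : ∃ g : V → ZMod p, ∀ e, φ e = g (hd e) - g (tl e) := by
  rcases isEmpty_or_nonempty V with h | h
  · exact ⟨fun _ => 0, fun e => (h.elim (tl e))⟩
  · obtain ⟨v₀⟩ := h
    have hwalk : ∀ w, ∃ l, LWalk tl hd v₀ w l := by
      intro w
      induction hconn v₀ w with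
      | refl => exact ⟨[], .nil v₀⟩
      | tail _ hstep ih =>
          obtain ⟨l, hl⟩ := ih
          obtain ⟨e, he | he⟩ := hstep
          · exact ⟨l ++ [(e, true)], hl.append (.consT e he.1 (he.2 ▸ .nil _))⟩
          · exact ⟨l ++ [(e, false)], hl.append (.consF e he.2 (he.1 ▸ .nil _))⟩
    choose L hL using hwalk
    refine ⟨fun w => wsum φ (L w), fun e => ?_⟩
    have hclosed : LWalk tl hd v₀ v₀
        (L (tl e) ++ (e, true) :: ((L (hd e)).reverse.map fun s => (s.1, !s.2))) :=
      (hL (tl e)).append (.consT e rfl (hL (hd e)).reverse)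
    have h0 := hφ.wsum_eq_zero hclosed
    rw [wsum_append] at h0
    have h1 : wsum φ ((e, true) :: ((L (hd e)).reverse.map fun s => (s.1, !s.2)))
        = φ e + -wsum φ (L (hd e)) := by
      rw [show wsum φ ((e, true) :: ((L (hd e)).reverse.map fun s => (s.1, !s.2)))
        = φ e + wsum φ ((L (hd e)).reverse.map fun s => (s.1, !s.2)) from by simp [wsum],
        wsum_reverse]
    rw [h1] at h0
    linear_combination h0

variable [Fintype E] [Fintype V] [DecidableEq V]

lemma tension_orth {f φ : E → ZMod p} (hf : IsFlow p tl hd f)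
    {g : V → ZMod p} (hg : ∀ e, φ e = g (hd e) - g (tl e)) : (∑ e, φ e * f e) = 0 := by
  have key : ∀ t : E → V, (∑ e, g (t e) * f e)
      = ∑ v, g v * ∑ e ∈ univ.filter (fun e => t e = v), f e := by
    intro t
    rw [← Finset.sum_fiberwise univ t (fun e => g (t e) * f e)]
    refine Finset.sum_congr rfl fun v _ => ?_
    rw [Finset.mul_sum]
    refine Finset.sum_congr rfl fun e he => ?_
    rw [(Finset.mem_filter.mp he).2]
  calc (∑ e, φ e * f e) = (∑ e, g (hd e) * f e) - ∑ e, g (tl e) * f e := by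
        rw [← Finset.sum_sub_distrib]
        exact Finset.sum_congr rfl fun e _ => by rw [hg e, sub_mul]
    _ = 0 := by rw [key hd, key tl, ← Finset.sum_sub_distrib]
                refine Finset.sum_eq_zero fun v _ => ?_
                rw [hf v]; ring

lemma isDualFlow_of_orth {φ : E → ZMod p}
    (h : ∀ f : E → ZMod p, IsFlow p tl hd f → (∑ e, φ e * f e) = 0) :
    IsDualFlow p tl hd φ := by
  classical
  intro n v e σ hclosed hstep
  set f : E → ZMod p := fun a => ∑ i : Fin n, if e i = a then (if σ i then 1 else -1) else 0
    with hfdef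
  have hsum : ∀ (t : E → V) (x : V), (∑ a ∈ univ.filter (fun a => t a = x), f a)
      = ∑ i : Fin n, if t (e i) = x then (if σ i then (1 : ZMod p) else -1) else 0 := by
    intro t x
    simp only [hfdef]
    rw [Finset.sum_comm]
    refine Finset.sum_congr rfl fun i _ => ?_
    rw [Finset.sum_ite_eq]
    simp [Finset.mem_filter]
  have hflow : IsFlow p tl hd f := by
    intro x
    rw [hsum hd x, hsum tl x, ← sub_eq_zero, ← Finset.sum_sub_distrib]
    set W : Fin (n + 1) → ZMod p := fun j => if v j = x then (1 : ZMod p) else 0 with hW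
    have hterm : ∀ i : Fin n,
        ((if hd (e i) = x then (if σ i then (1 : ZMod p) else -1) else 0)
          - (if tl (e i) = x then (if σ i then (1 : ZMod p) else -1) else 0))
        = W i.succ - W i.castSucc := by
      intro i
      rcases hb : σ i with _ | _
      · obtain ⟨h1, h2⟩ := (hstep i).2 hb
        rw [h1, h2, hW]
        by_cases hx1 : v i.succ = x <;> by_cases hx2 : v i.castSucc = x <;>
          simp [hx1, hx2]
      · obtain ⟨h1, h2⟩ := (hstep i).1 hb
        rw [h1, h2, hW]
        by_cases hx1 : v i.succ = x <;> by_cases hx2 : v i.castSucc = x <;>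
          simp [hx1, hx2]
    rw [Finset.sum_congr rfl fun i _ => hterm i, fin_telescope W, hW]
    simp only [← hclosed]
    ring
  have h0 := h f hflow
  rw [show (∑ a, φ a * f a) = ∑ i : Fin n, (if σ i then φ (e i) else -φ (e i)) from ?_] at h0
  · exact h0
  · simp only [hfdef, Finset.mul_sum]
    rw [Finset.sum_comm]
    refine Finset.sum_congr rfl fun i _ => ?_
    simp only [mul_ite, mul_zero]
    rw [Finset.sum_ite_eq]
    cases hb : σ i <;> simp [hb]

end Graph

section Char

variable {p : ℕ} [NeZero p]

noncomputable def pchar (p : ℕ) [NeZero p] : AddChar (ZMod p) ℂ :=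
  AddChar.zmodChar p ((Complex.isPrimitiveRoot_exp p (NeZero.ne p)).pow_eq_one)

lemma pchar_eq_one_iff (x : ZMod p) : pchar p x = 1 ↔ x = 0 := by
  have hprim := Complex.isPrimitiveRoot_exp p (NeZero.ne p)
  rw [pchar, AddChar.zmodChar_apply, hprim.pow_eq_one_iff_dvd]
  constructor
  · intro hdvd
    exact (ZMod.val_eq_zero x).mp (Nat.eq_zero_of_dvd_of_lt hdvd (ZMod.val_lt x))
  · rintro rfl; simp

lemma pchar_ne_zero (x : ZMod p) : pchar p x ≠ 0 := by
  rw [pchar, AddChar.zmodChar_apply]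
  exact pow_ne_zero _ (Complex.exp_ne_zero _)

lemma pchar_map_sum {ι : Type} (s : Finset ι) (g : ι → ZMod p) :
    pchar p (∑ i ∈ s, g i) = ∏ i ∈ s, pchar p (g i) := by
  classical
  induction s using Finset.cons_induction with
  | empty => simp
  | cons a s ha ih => rw [Finset.sum_cons, Finset.prod_cons, AddChar.map_add_eq_mul, ih]

lemma pchar_mul_sum (x : ZMod p) :
    (∑ a : ZMod p, pchar p (a * x)) = if x = 0 then (p : ℂ) else 0 := by
  split_ifs with hx
  · subst hx
    simp [Finset.card_univ, ZMod.card]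
  · have h1 : pchar p x ≠ 1 := fun h => hx ((pchar_eq_one_iff x).mp h)
    have hre : (∑ a : ZMod p, pchar p (a * x)) = pchar p x * ∑ a : ZMod p, pchar p (a * x) := by
      rw [Finset.mul_sum, ← Equiv.sum_comp (Equiv.addLeft (1 : ZMod p))
        (fun a => pchar p (a * x))]
      refine Finset.sum_congr rfl fun a _ => ?_
      show pchar p ((1 + a) * x) = pchar p x * pchar p (a * x)
      rw [add_mul, one_mul, AddChar.map_add_eq_mul]
    have h2 : (1 - pchar p x) * (∑ a : ZMod p, pchar p (a * x)) = 0 := by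
      rw [sub_mul, one_mul, sub_eq_zero]; exact hre
    exact (mul_eq_zero.mp h2).resolve_left
      (sub_ne_zero.mpr fun h => h1 h.symm)

end Char

section Flows

variable {V E : Type} [Fintype V] [Fintype E] [DecidableEq V] [DecidableEq E] {p : ℕ}
  [NeZero p] (tl hd : E → V)

lemma isFlow_zero : IsFlow p tl hd (0 : E → ZMod p) := by
  intro v; simp

lemma isFlow_add {f g : E → ZMod p} (hf : IsFlow p tl hd f) (hg : IsFlow p tl hd g) :
    IsFlow p tl hd (f + g) := by
  intro v
  simp only [Pi.add_apply, Finset.sum_add_distrib, hf v, hg v]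

lemma isFlow_sub {f g : E → ZMod p} (hf : IsFlow p tl hd f) (hg : IsFlow p tl hd g) :
    IsFlow p tl hd (f - g) := by
  intro v
  simp only [Pi.sub_apply, Finset.sum_sub_distrib, hf v, hg v]

variable [DecidablePred fun f : E → ZMod p => IsFlow p tl hd f]

/-- The finset of flows. -/
noncomputable def flowFinset : Finset (E → ZMod p) :=
  Finset.univ.filter fun f => IsFlow p tl hd f

lemma flowFinset_card_ne_zero : (flowFinset tl hd (p := p)).card ≠ 0 := by
  refine Finset.card_ne_zero_of_mem (a := 0) ?_
  simp [flowFinset, isFlow_zero]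

open scoped Classical in
lemma sum_char_flows (hconn : DigraphConnected tl hd) (φ : E → ZMod p) :
    (∑ f ∈ flowFinset tl hd (p := p), pchar p (∑ e, φ e * f e)) =
      if IsDualFlow p tl hd φ then ((flowFinset tl hd (p := p)).card : ℂ) else 0 := by
  split_ifs with hD
  · obtain ⟨g, hg⟩ := exists_potential hconn hD
    rw [Finset.sum_congr rfl fun f hf => ?_, Finset.sum_const, nsmul_eq_mul, mul_one]
    rw [tension_orth (Finset.mem_filter.mp hf).2 hg]
    simp
  · have hex : ∃ f₀ : E → ZMod p, IsFlow p tl hd f₀ ∧ (∑ e, φ e * f₀ e) ≠ 0 := by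
      by_contra hcon
      push_neg at hcon
      exact hD (isDualFlow_of_orth fun f hf => hcon f hf)
    obtain ⟨f₀, hf₀, hc⟩ := hex
    have h1 : pchar p (∑ e, φ e * f₀ e) ≠ 1 :=
      fun h => hc ((pchar_eq_one_iff _).mp h)
    have hre : (∑ f ∈ flowFinset tl hd (p := p), pchar p (∑ e, φ e * f e))
        = pchar p (∑ e, φ e * f₀ e) * ∑ f ∈ flowFinset tl hd (p := p),
            pchar p (∑ e, φ e * f e) := by
      rw [Finset.mul_sum]
      refine Finset.sum_nbij' (fun f => f - f₀) (fun f => f₀ + f) ?_ ?_ ?_ ?_ ?_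
      · intro f hf
        simp only [flowFinset, Finset.mem_filter, Finset.mem_univ, true_and] at hf ⊢
        exact isFlow_sub tl hd hf hf₀
      · intro f hf
        simp only [flowFinset, Finset.mem_filter, Finset.mem_univ, true_and] at hf ⊢
        exact isFlow_add tl hd hf₀ hf
      · intro f _; simp
      · intro f _; simp
      · intro f _
        rw [← AddChar.map_add_eq_mul, ← Finset.sum_add_distrib]
        congr 1
        refine Finset.sum_congr rfl fun e _ => ?_
        simp [Pi.sub_apply]
        ring
    have h2 : (1 - pchar p (∑ e, φ e * f₀ e)) *
        (∑ f ∈ flowFinset tl hd (p := p), pchar p (∑ e, φ e * f e)) = 0 := by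
      rw [sub_mul, one_mul, sub_eq_zero]; exact hre
    exact (mul_eq_zero.mp h2).resolve_left (sub_ne_zero.mpr fun h => h1 h.symm)

end Flows

section Counting

variable {V E : Type} [Fintype V] [Fintype E] [DecidableEq V] [DecidableEq E] {p : ℕ}
  [NeZero p] (tl hd : E → V)

lemma cast_psi_ne (hp : 2 ≤ p) (s : Fin (p - 1)) :
    ((s : ℕ) : ZMod p) ≠ ((p - 1 : ℕ) : ZMod p) := by
  intro h
  have hs := s.isLt
  have h1 : ((s : ℕ) : ZMod p).val = (s : ℕ) := ZMod.val_cast_of_lt (by omega)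
  have h2 : (((p - 1 : ℕ) : ZMod p)).val = p - 1 := ZMod.val_cast_of_lt (by omega)
  rw [h] at h1
  omega

lemma cast_pred_eq_neg_one (hp : 2 ≤ p) : ((p - 1 : ℕ) : ZMod p) = -1 := by
  have : ((p - 1 : ℕ) : ZMod p) = (p : ZMod p) - 1 := by
    rw [Nat.cast_sub (by omega)]; simp
  rw [this, ZMod.natCast_self, zero_sub]

open scoped Classical in
lemma count_diff_eq (hp : 2 ≤ p) (ψ : E → Fin (p - 1)) :
    (∑ φ : E → ZMod p, (if IsDualFlow p tl hd φ then (1 : ℂ) else 0) *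
        ∏ e, ((if φ e = ((ψ e : ℕ) : ZMod p) then (1 : ℂ) else 0)
          - (if φ e = ((p - 1 : ℕ) : ZMod p) then (1 : ℂ) else 0)))
    = (Nat.card {φ : E → ZMod p //
          IsDualFlow p tl hd φ ∧ ConformalMap p ψ φ ∧ EvenMap p φ} : ℂ)
      - (Nat.card {φ : E → ZMod p //
          IsDualFlow p tl hd φ ∧ ConformalMap p ψ φ ∧ ¬ EvenMap p φ} : ℂ) := by
  have hcardE : ∀ φ : E → ZMod p, Nat.card {e : E // φ e = ((p - 1 : ℕ) : ZMod p)}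
      = (univ.filter fun e => φ e = ((p - 1 : ℕ) : ZMod p)).card := by
    intro φ; rw [Nat.card_eq_fintype_card, Fintype.card_subtype]
  have hprod : ∀ φ : E → ZMod p,
      (∏ e, ((if φ e = ((ψ e : ℕ) : ZMod p) then (1 : ℂ) else 0)
          - (if φ e = ((p - 1 : ℕ) : ZMod p) then (1 : ℂ) else 0)))
      = if ConformalMap p ψ φ then
          ((-1 : ℂ)) ^ (univ.filter fun e => φ e = ((p - 1 : ℕ) : ZMod p)).card else 0 := by
    intro φ
    split_ifs with hc
    · have hfac : ∀ e, ((if φ e = ((ψ e : ℕ) : ZMod p) then (1 : ℂ) else 0)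
          - (if φ e = ((p - 1 : ℕ) : ZMod p) then (1 : ℂ) else 0))
          = if φ e = ((p - 1 : ℕ) : ZMod p) then (-1 : ℂ) else 1 := by
        intro e
        rcases hc e with h | h
        · have hne := cast_psi_ne hp (ψ e)
          simp [h, hne]
        · have hne := (cast_psi_ne hp (ψ e)).symm
          simp [h, hne]
      rw [Finset.prod_congr rfl fun e _ => hfac e, Finset.prod_ite (fun _ => (-1 : ℂ))
        (fun _ => (1 : ℂ)), Finset.prod_const, Finset.prod_const, one_pow, mul_one]
    · obtain ⟨e₀, he₀⟩ := not_forall.mp hc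
      push_neg at he₀
      exact Finset.prod_eq_zero (Finset.mem_univ e₀) (by simp [he₀.1, he₀.2])
  calc (∑ φ : E → ZMod p, (if IsDualFlow p tl hd φ then (1 : ℂ) else 0) *
        ∏ e, ((if φ e = ((ψ e : ℕ) : ZMod p) then (1 : ℂ) else 0)
          - (if φ e = ((p - 1 : ℕ) : ZMod p) then (1 : ℂ) else 0)))
      = ∑ φ : E → ZMod p, (if IsDualFlow p tl hd φ ∧ ConformalMap p ψ φ then
          ((-1 : ℂ)) ^ (univ.filter fun e => φ e = ((p - 1 : ℕ) : ZMod p)).card else 0) := by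
        refine Finset.sum_congr rfl fun φ _ => ?_
        rw [hprod φ, ite_and]
        split_ifs <;> simp
    _ = ∑ φ ∈ univ.filter (fun φ : E → ZMod p =>
          IsDualFlow p tl hd φ ∧ ConformalMap p ψ φ),
          ((-1 : ℂ)) ^ (univ.filter fun e => φ e = ((p - 1 : ℕ) : ZMod p)).card :=
        (Finset.sum_filter _ _).symm
    _ = (Nat.card {φ : E → ZMod p //
          IsDualFlow p tl hd φ ∧ ConformalMap p ψ φ ∧ EvenMap p φ} : ℂ)
      - (Nat.card {φ : E → ZMod p //
          IsDualFlow p tl hd φ ∧ ConformalMap p ψ φ ∧ ¬ EvenMap p φ} : ℂ) := by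
        rw [← Finset.sum_filter_add_sum_filter_not
          (univ.filter (fun φ : E → ZMod p => IsDualFlow p tl hd φ ∧ ConformalMap p ψ φ))
          (fun φ => EvenMap p φ)]
        have he : ∀ φ ∈ (univ.filter (fun φ : E → ZMod p =>
            IsDualFlow p tl hd φ ∧ ConformalMap p ψ φ)).filter (fun φ => EvenMap p φ),
            ((-1 : ℂ)) ^ (univ.filter fun e => φ e = ((p - 1 : ℕ) : ZMod p)).card = 1 := by
          intro φ hφ
          have := (Finset.mem_filter.mp hφ).2
          rw [EvenMap, hcardE φ] at this
          exact Even.neg_one_pow this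
        have ho : ∀ φ ∈ (univ.filter (fun φ : E → ZMod p =>
            IsDualFlow p tl hd φ ∧ ConformalMap p ψ φ)).filter (fun φ => ¬ EvenMap p φ),
            ((-1 : ℂ)) ^ (univ.filter fun e => φ e = ((p - 1 : ℕ) : ZMod p)).card = -1 := by
          intro φ hφ
          have := (Finset.mem_filter.mp hφ).2
          rw [EvenMap, hcardE φ] at this
          exact Odd.neg_one_pow (Nat.not_even_iff_odd.mp this)
        rw [Finset.sum_congr rfl he, Finset.sum_congr rfl ho, Finset.sum_const,
          Finset.sum_const]
        have hc1 : ((univ.filter (fun φ : E → ZMod p =>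
            IsDualFlow p tl hd φ ∧ ConformalMap p ψ φ)).filter (fun φ => EvenMap p φ)).card
            = Nat.card {φ : E → ZMod p //
              IsDualFlow p tl hd φ ∧ ConformalMap p ψ φ ∧ EvenMap p φ} := by
          rw [Nat.card_eq_fintype_card, Fintype.card_subtype, Finset.filter_filter]
          congr 1
          ext φ
          simp [and_assoc]
        have hc2 : ((univ.filter (fun φ : E → ZMod p =>
            IsDualFlow p tl hd φ ∧ ConformalMap p ψ φ)).filter (fun φ => ¬ EvenMap p φ)).card
            = Nat.card {φ : E → ZMod p //
              IsDualFlow p tl hd φ ∧ ConformalMap p ψ φ ∧ ¬ EvenMap p φ} := by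
          rw [Nat.card_eq_fintype_card, Fintype.card_subtype, Finset.filter_filter]
          congr 1
          ext φ
          simp [and_assoc]
        rw [hc1, hc2]
        push_cast
        ring

end Counting

section Key

variable {V E : Type} [Fintype V] [Fintype E] [DecidableEq V] [DecidableEq E] {p : ℕ}
  [NeZero p] (tl hd : E → V)

open scoped Classical in
lemma key_identity (hconn : DigraphConnected tl hd) (ψ : E → Fin (p - 1)) :
    (∑ φ : E → ZMod p, (if IsDualFlow p tl hd φ then (1 : ℂ) else 0) *
        ∏ e, ((if φ e = ((ψ e : ℕ) : ZMod p) then (1 : ℂ) else 0)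
          - (if φ e = ((p - 1 : ℕ) : ZMod p) then (1 : ℂ) else 0)))
    = (1 / ((flowFinset tl hd (p := p)).card : ℂ)) *
        ∑ f ∈ flowFinset tl hd (p := p),
          ∏ e, (pchar p (((ψ e : ℕ) : ZMod p) * f e)
            - pchar p (((p - 1 : ℕ) : ZMod p) * f e)) := by
  have hcard : ((flowFinset tl hd (p := p)).card : ℂ) ≠ 0 :=
    Nat.cast_ne_zero.mpr (flowFinset_card_ne_zero tl hd)
  have hind : ∀ φ : E → ZMod p, (if IsDualFlow p tl hd φ then (1 : ℂ) else 0)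
      = (1 / ((flowFinset tl hd (p := p)).card : ℂ)) *
          ∑ f ∈ flowFinset tl hd (p := p), pchar p (∑ e, φ e * f e) := by
    intro φ
    rw [sum_char_flows tl hd hconn φ]
    split_ifs
    · field_simp
    · simp
  calc (∑ φ : E → ZMod p, (if IsDualFlow p tl hd φ then (1 : ℂ) else 0) *
        ∏ e, ((if φ e = ((ψ e : ℕ) : ZMod p) then (1 : ℂ) else 0)
          - (if φ e = ((p - 1 : ℕ) : ZMod p) then (1 : ℂ) else 0)))
      = (1 / ((flowFinset tl hd (p := p)).card : ℂ)) *
          ∑ φ : E → ZMod p, ∑ f ∈ flowFinset tl hd (p := p),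
            (∏ e, pchar p (φ e * f e)) *
            ∏ e, ((if φ e = ((ψ e : ℕ) : ZMod p) then (1 : ℂ) else 0)
              - (if φ e = ((p - 1 : ℕ) : ZMod p) then (1 : ℂ) else 0)) := by
        rw [Finset.mul_sum]
        refine Finset.sum_congr rfl fun φ _ => ?_
        rw [hind φ, mul_assoc, Finset.sum_mul]
        congr 1
        refine Finset.sum_congr rfl fun f _ => ?_
        rw [pchar_map_sum]
    _ = (1 / ((flowFinset tl hd (p := p)).card : ℂ)) *
          ∑ f ∈ flowFinset tl hd (p := p), ∑ φ : E → ZMod p,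
            ∏ e, (pchar p (φ e * f e) *
              ((if φ e = ((ψ e : ℕ) : ZMod p) then (1 : ℂ) else 0)
                - (if φ e = ((p - 1 : ℕ) : ZMod p) then (1 : ℂ) else 0))) := by
        rw [Finset.sum_comm]
        congr 1
        refine Finset.sum_congr rfl fun f _ => Finset.sum_congr rfl fun φ _ => ?_
        rw [← Finset.prod_mul_distrib]
    _ = (1 / ((flowFinset tl hd (p := p)).card : ℂ)) *
          ∑ f ∈ flowFinset tl hd (p := p),
            ∏ e, ∑ x : ZMod p, (pchar p (x * f e) *
              ((if x = ((ψ e : ℕ) : ZMod p) then (1 : ℂ) else 0)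
                - (if x = ((p - 1 : ℕ) : ZMod p) then (1 : ℂ) else 0))) := by
        congr 1
        refine Finset.sum_congr rfl fun f _ => ?_
        exact (Fintype.prod_sum fun e x => pchar p (x * f e) *
          ((if x = ((ψ e : ℕ) : ZMod p) then (1 : ℂ) else 0)
            - (if x = ((p - 1 : ℕ) : ZMod p) then (1 : ℂ) else 0))).symm
    _ = (1 / ((flowFinset tl hd (p := p)).card : ℂ)) *
        ∑ f ∈ flowFinset tl hd (p := p),
          ∏ e, (pchar p (((ψ e : ℕ) : ZMod p) * f e)
            - pchar p (((p - 1 : ℕ) : ZMod p) * f e)) := by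
        congr 1
        refine Finset.sum_congr rfl fun f _ => Finset.prod_congr rfl fun e _ => ?_
        rw [Finset.sum_congr rfl fun x (_ : x ∈ univ) => (mul_sub (pchar p (x * f e)) _ _),
          Finset.sum_sub_distrib]
        congr 1
        · simp [mul_ite, mul_one, mul_zero, Finset.sum_ite_eq']
        · simp [mul_ite, mul_one, mul_zero, Finset.sum_ite_eq']

lemma shift_sum (hp : 2 ≤ p) (x : ZMod p) :
    (∑ s : Fin (p - 1), pchar p ((((s : ℕ) + 1 : ℕ) : ZMod p) * x))
      = (if x = 0 then (p : ℂ) else 0) - 1 := by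
  classical
  have h2 : (∑ s : Fin (p - 1), pchar p ((((s : ℕ) + 1 : ℕ) : ZMod p) * x))
      = ∑ a ∈ (univ : Finset (ZMod p)).erase 0, pchar p (a * x) := by
    refine Finset.sum_nbij' (fun s => (((s : ℕ) + 1 : ℕ) : ZMod p))
      (fun a => ⟨a.val - 1, by have := ZMod.val_lt a; omega⟩) ?_ ?_ ?_ ?_ ?_
    · intro s _
      refine Finset.mem_erase.mpr ⟨?_, Finset.mem_univ _⟩
      intro h
      have := congrArg ZMod.val h
      rw [ZMod.val_cast_of_lt (by have := s.isLt; omega), ZMod.val_zero] at this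
      omega
    · intro a _; exact Finset.mem_univ _
    · intro s _
      apply Fin.ext
      simp only []
      rw [ZMod.val_cast_of_lt (by have := s.isLt; omega)]
      omega
    · intro a ha
      have hane : a ≠ 0 := (Finset.mem_erase.mp ha).1
      have hval : a.val ≠ 0 := fun h => hane ((ZMod.val_eq_zero a).mp h)
      have : (a.val - 1) + 1 = a.val := by omega
      simp only [this]
      rw [ZMod.natCast_val, ZMod.cast_id]
    · intro s _; rfl
  rw [h2, Finset.sum_erase_eq_sub (Finset.mem_univ (0 : ZMod p)), pchar_mul_sum]
  simp

end Key

theorem nowhere_zero_flow_iff_conformal_count {V E : Type} [Fintype V] [Fintype E]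
    [DecidableEq V] (p : ℕ) (hp : 2 ≤ p) (tl hd : E → V)
    (hconn : DigraphConnected tl hd) :
    (∃ φ : E → ZMod p, (∀ e, φ e ≠ 0) ∧ IsFlow p tl hd φ) ↔
    ∃ ψ : E → Fin (p - 1),
      Nat.card {φ : E → ZMod p //
          IsDualFlow p tl hd φ ∧ ConformalMap p ψ φ ∧ EvenMap p φ} ≠
      Nat.card {φ : E → ZMod p //
          IsDualFlow p tl hd φ ∧ ConformalMap p ψ φ ∧ ¬ EvenMap p φ} := by
  classical
  haveI : NeZero p := ⟨by omega⟩
  have hcard : ((flowFinset tl hd (p := p)).card : ℂ) ≠ 0 :=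
    Nat.cast_ne_zero.mpr (flowFinset_card_ne_zero tl hd)
  constructor
  · rintro ⟨c, hcnz, hcflow⟩
    by_contra hcon
    push_neg at hcon
    have hN : ∀ ψ : E → Fin (p - 1),
        (∑ f ∈ flowFinset tl hd (p := p), ∏ e, (pchar p (((ψ e : ℕ) : ZMod p) * f e)
            - pchar p (((p - 1 : ℕ) : ZMod p) * f e))) = 0 := by
      intro ψ
      have h1 := key_identity tl hd hconn ψ
      have h2 := count_diff_eq tl hd hp ψ
      rw [hcon ψ, sub_self] at h2
      rw [h2] at h1
      rcases mul_eq_zero.mp h1.symm with h | h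
      · exact absurd h (one_div_ne_zero hcard)
      · exact h
    have hAval : ∀ (f : E → ZMod p) (e : E),
        (∑ s : Fin (p - 1),
          pchar p (-((((s : ℕ) + 1 : ℕ)) : ZMod p) * c e) *
            (pchar p (((s : ℕ) : ZMod p) * f e) - pchar p (((p - 1 : ℕ) : ZMod p) * f e)))
        = pchar p (-(f e)) * (if f e = c e then (p : ℂ) else 0) := by
      intro f e
      have hterm : ∀ s : Fin (p - 1),
          pchar p (-((((s : ℕ) + 1 : ℕ)) : ZMod p) * c e) *
            (pchar p (((s : ℕ) : ZMod p) * f e) - pchar p (((p - 1 : ℕ) : ZMod p) * f e))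
          = pchar p (-(f e)) *
            (pchar p ((((s : ℕ) + 1 : ℕ) : ZMod p) * (f e - c e))
              - pchar p ((((s : ℕ) + 1 : ℕ) : ZMod p) * (- c e))) := by
        intro s
        have hcast : ((((s : ℕ) + 1 : ℕ)) : ZMod p) = ((s : ℕ) : ZMod p) + 1 := by
          push_cast; ring
        rw [cast_pred_eq_neg_one hp, hcast, mul_sub, mul_sub,
          ← AddChar.map_add_eq_mul, ← AddChar.map_add_eq_mul,
          ← AddChar.map_add_eq_mul, ← AddChar.map_add_eq_mul]
        congr 1 <;> congr 1 <;> ring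
      rw [Finset.sum_congr rfl fun s _ => hterm s, ← Finset.mul_sum,
        Finset.sum_sub_distrib, shift_sum hp (f e - c e), shift_sum hp (-c e),
        if_neg (fun h => hcnz e (neg_eq_zero.mp h))]
      simp only [sub_eq_zero]
      ring
    have hS : (∑ f ∈ flowFinset tl hd (p := p), ∏ e, (∑ s : Fin (p - 1),
        pchar p (-((((s : ℕ) + 1 : ℕ)) : ZMod p) * c e) *
          (pchar p (((s : ℕ) : ZMod p) * f e)
            - pchar p (((p - 1 : ℕ) : ZMod p) * f e)))) = 0 := by
      calc (∑ f ∈ flowFinset tl hd (p := p), ∏ e, (∑ s : Fin (p - 1),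
            pchar p (-((((s : ℕ) + 1 : ℕ)) : ZMod p) * c e) *
              (pchar p (((s : ℕ) : ZMod p) * f e)
                - pchar p (((p - 1 : ℕ) : ZMod p) * f e))))
          = ∑ f ∈ flowFinset tl hd (p := p), ∑ ψ : E → Fin (p - 1), ∏ e,
              (pchar p (-((((ψ e : ℕ) + 1 : ℕ)) : ZMod p) * c e) *
                (pchar p (((ψ e : ℕ) : ZMod p) * f e)
                  - pchar p (((p - 1 : ℕ) : ZMod p) * f e))) := by
            refine Finset.sum_congr rfl fun f _ => ?_
            exact Fintype.prod_sum fun (e : E) (s : Fin (p - 1)) =>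
              pchar p (-((((s : ℕ) + 1 : ℕ)) : ZMod p) * c e) *
                (pchar p (((s : ℕ) : ZMod p) * f e)
                  - pchar p (((p - 1 : ℕ) : ZMod p) * f e))
        _ = ∑ ψ : E → Fin (p - 1), ∑ f ∈ flowFinset tl hd (p := p), ∏ e,
              (pchar p (-((((ψ e : ℕ) + 1 : ℕ)) : ZMod p) * c e) *
                (pchar p (((ψ e : ℕ) : ZMod p) * f e)
                  - pchar p (((p - 1 : ℕ) : ZMod p) * f e))) := Finset.sum_comm
        _ = ∑ ψ : E → Fin (p - 1),
              (∏ e, pchar p (-((((ψ e : ℕ) + 1 : ℕ)) : ZMod p) * c e)) *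
              ∑ f ∈ flowFinset tl hd (p := p), ∏ e,
                (pchar p (((ψ e : ℕ) : ZMod p) * f e)
                  - pchar p (((p - 1 : ℕ) : ZMod p) * f e)) := by
            refine Finset.sum_congr rfl fun ψ _ => ?_
            rw [Finset.mul_sum]
            refine Finset.sum_congr rfl fun f _ => ?_
            rw [← Finset.prod_mul_distrib]
        _ = 0 := Finset.sum_eq_zero fun ψ _ => by rw [hN ψ, mul_zero]
    have hcFF : c ∈ flowFinset tl hd (p := p) := by
      simp [flowFinset, hcflow]
    have hval : (∑ f ∈ flowFinset tl hd (p := p), ∏ e, (∑ s : Fin (p - 1),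
        pchar p (-((((s : ℕ) + 1 : ℕ)) : ZMod p) * c e) *
          (pchar p (((s : ℕ) : ZMod p) * f e)
            - pchar p (((p - 1 : ℕ) : ZMod p) * f e))))
        = ∏ e, (pchar p (-(c e)) * (p : ℂ)) := by
      rw [Finset.sum_eq_single_of_mem c hcFF ?_]
      · refine Finset.prod_congr rfl fun e _ => ?_
        rw [hAval c e, if_pos rfl]
      · intro f _ hne
        obtain ⟨e₀, he₀⟩ : ∃ e₀, f e₀ ≠ c e₀ := by
          by_contra h; push_neg at h; exact hne (funext h)
        exact Finset.prod_eq_zero (Finset.mem_univ e₀)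
          (by rw [hAval f e₀, if_neg he₀, mul_zero])
    rw [hval] at hS
    exact (Finset.prod_ne_zero_iff.mpr fun e _ => mul_ne_zero (pchar_ne_zero _)
      (Nat.cast_ne_zero.mpr (by omega))) hS
  · rintro ⟨ψ, hne⟩
    have h2 := count_diff_eq tl hd hp ψ
    have h1 := key_identity tl hd hconn ψ
    have hZ : (∑ φ : E → ZMod p, (if IsDualFlow p tl hd φ then (1 : ℂ) else 0) *
        ∏ e, ((if φ e = ((ψ e : ℕ) : ZMod p) then (1 : ℂ) else 0)
          - (if φ e = ((p - 1 : ℕ) : ZMod p) then (1 : ℂ) else 0))) ≠ 0 := by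
      rw [h2]
      intro h
      exact hne (Nat.cast_inj.mp (sub_eq_zero.mp h))
    rw [h1] at hZ
    have hSne : (∑ f ∈ flowFinset tl hd (p := p),
        ∏ e, (pchar p (((ψ e : ℕ) : ZMod p) * f e)
          - pchar p (((p - 1 : ℕ) : ZMod p) * f e))) ≠ 0 :=
      fun h => hZ (by rw [h, mul_zero])
    obtain ⟨f, hfFF, hfne⟩ := Finset.exists_ne_zero_of_sum_ne_zero hSne
    have hfflow : IsFlow p tl hd f := by
      simpa [flowFinset] using hfFF
    refine ⟨f, fun e he0 => ?_, hfflow⟩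
    have := Finset.prod_ne_zero_iff.mp hfne e (Finset.mem_univ e)
    apply this
    rw [he0, mul_zero, mul_zero, sub_self]
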